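/- arXiv:math/0304033 — 6 statements merged into one kernel-verified Lean document; each statement's English description precedes it below -/
import Mathlib

section
/- Let $c$ be a nonzero element of a field of characteristic zero and let $(P_s)_{s\ge 0}$ be a sequence in a vector space. Define $P'_k = \sum_{s=0}^{k} \binom{k}{s}(-c)^s P_s$ and $P''_{i,j} = \sum_{k=0}^{j}(-1)^k \binom{i}{k} P'_k$. Then $P''_{i,j} = \sum_{s=0}^{j} c^s \binom{i}{s}\binom{i-1-s}{j-s}(-1)^{j-s} P_s$ for all $i > j \ge 0$. In particular $P''_{i,i} = c^i P_i$ when the formula is extended to $j=i$. -/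
private lemma altSum {F : Type*} [Field F] (n : ℕ) : ∀ t : ℕ,
    ∑ m ∈ Finset.range (t + 1), (-1 : F) ^ m * ((n + 1).choose m : F)
      = (-1 : F) ^ t * (n.choose t : F) := by
  intro t
  induction t with
  | zero => simp
  | succ t ih =>
      rw [Finset.sum_range_succ, ih, Nat.choose_succ_succ]
      push_cast
      ring

private lemma keySum {F : Type*} [Field F] (i s j : ℕ) (hsi : s < i) (hsj : s ≤ j)
    (hji : j ≤ i) :
    ∑ k ∈ Finset.range (j + 1), (-1 : F) ^ k * (i.choose k : F) * (k.choose s : F)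
      = (-1 : F) ^ j * (i.choose s : F) * ((i - 1 - s).choose (j - s) : F) := by
  have h0 : ∑ k ∈ Finset.range (j + 1), (-1 : F) ^ k * (i.choose k : F) * (k.choose s : F)
      = ∑ k ∈ Finset.Ico s (j + 1), (-1 : F) ^ k * (i.choose k : F) * (k.choose s : F) := by
    symm
    apply Finset.sum_subset
    · intro k hk
      simp only [Finset.mem_Ico] at hk
      simp only [Finset.mem_range]
      omega
    · intro k hk hk'
      simp only [Finset.mem_range] at hk
      simp only [Finset.mem_Ico] at hk'
      have hks : k < s := by omega
      rw [Nat.choose_eq_zero_of_lt hks]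
      simp
  rw [h0, Finset.sum_Ico_eq_sum_range, show j + 1 - s = (j - s) + 1 from by omega]
  have hstep : ∀ m ∈ Finset.range ((j - s) + 1),
      (-1 : F) ^ (s + m) * (i.choose (s + m) : F) * ((s + m).choose s : F)
        = ((-1 : F) ^ s * (i.choose s : F)) *
          ((-1 : F) ^ m * (((i - 1 - s) + 1).choose m : F)) := by
    intro m hm
    simp only [Finset.mem_range] at hm
    have hkn : s + m ≤ i := by omega
    have hsk : s ≤ s + m := by omega
    have := Nat.choose_mul (n := i) hsk
    rw [show s + m - s = m from by omega] at this
    have hcast : (i.choose (s + m) : F) * ((s + m).choose s : F)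
        = (i.choose s : F) * ((i - s).choose m : F) := by
      exact_mod_cast congrArg (Nat.cast : ℕ → F) this
    rw [show (i - 1 - s) + 1 = i - s from by omega, pow_add]
    calc (-1 : F) ^ s * (-1 : F) ^ m * (i.choose (s + m) : F) * ((s + m).choose s : F)
        = (-1 : F) ^ s * (-1 : F) ^ m *
            ((i.choose (s + m) : F) * ((s + m).choose s : F)) := by ring
      _ = (-1 : F) ^ s * (-1 : F) ^ m * ((i.choose s : F) * ((i - s).choose m : F)) := by
            rw [hcast]
      _ = (-1 : F) ^ s * (i.choose s : F) * ((-1 : F) ^ m * ((i - s).choose m : F)) := by ring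
  rw [Finset.sum_congr rfl hstep, ← Finset.mul_sum, altSum]
  have e1 : (-1 : F) ^ j = (-1 : F) ^ s * (-1 : F) ^ (j - s) := by
    rw [← pow_add]
    congr 1
    omega
  rw [e1]
  ring

/-- The binomial-inversion identity for `P''_{i,j}` (Section 2 of the paper). -/
theorem stmt_1 {F V : Type*} [Field F] [CharZero F] [AddCommGroup V] [Module F V]
    (c : F) (hc : c ≠ 0) (P : ℕ → V)
    (P' : ℕ → V)
    (hP' : ∀ k, P' k = ∑ s ∈ Finset.range (k + 1), ((k.choose s : F) * (-c) ^ s) • P s)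
    (P'' : ℕ → ℕ → V)
    (hP'' : ∀ i j, P'' i j = ∑ k ∈ Finset.range (j + 1), ((-1 : F) ^ k * (i.choose k : F)) • P' k) :
    (∀ i j : ℕ, j < i → P'' i j =
      ∑ s ∈ Finset.range (j + 1),
        (c ^ s * (i.choose s : F) * ((i - 1 - s).choose (j - s) : F) * (-1 : F) ^ (j - s)) • P s)
    ∧ ∀ i : ℕ, P'' i i = c ^ i • P i := by
  have main : ∀ i j : ℕ, P'' i j = ∑ s ∈ Finset.range (j + 1),
      ((∑ k ∈ Finset.range (j + 1),
          (-1 : F) ^ k * (i.choose k : F) * (k.choose s : F)) * (-c) ^ s) • P s := by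
    intro i j
    rw [hP'' i j]
    have h1 : ∀ k ∈ Finset.range (j + 1),
        ((-1 : F) ^ k * (i.choose k : F)) • P' k
          = ∑ s ∈ Finset.range (j + 1),
              ((-1 : F) ^ k * (i.choose k : F) * (k.choose s : F) * (-c) ^ s) • P s := by
      intro k hk
      simp only [Finset.mem_range] at hk
      rw [hP' k, Finset.smul_sum]
      have h2 : ∀ s ∈ Finset.range (k + 1),
          ((-1 : F) ^ k * (i.choose k : F)) • (((k.choose s : F) * (-c) ^ s) • P s)
            = ((-1 : F) ^ k * (i.choose k : F) * (k.choose s : F) * (-c) ^ s) • P s := by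
        intro s _
        rw [smul_smul]
        ring_nf
      rw [Finset.sum_congr rfl h2]
      apply Finset.sum_subset
      · intro s hs
        simp only [Finset.mem_range] at hs ⊢
        omega
      · intro s hs hs'
        simp only [Finset.mem_range] at hs hs'
        have : k < s := by omega
        rw [Nat.choose_eq_zero_of_lt this]
        simp
    rw [Finset.sum_congr rfl h1, Finset.sum_comm]
    refine Finset.sum_congr rfl fun s _ => ?_
    rw [Finset.sum_mul, Finset.sum_smul]
  constructor
  · intro i j hij
    rw [main i j]
    refine Finset.sum_congr rfl fun s hs => ?_
    simp only [Finset.mem_range] at hs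
    rw [keySum i s j (by omega) (by omega) (by omega)]
    congr 1
    have e1 : (-1 : F) ^ j = (-1 : F) ^ s * (-1 : F) ^ (j - s) := by
      rw [← pow_add]; congr 1; omega
    have e2 : (-c : F) ^ s = (-1 : F) ^ s * c ^ s := by rw [neg_pow]
    have e3 : (-1 : F) ^ s * (-1 : F) ^ s = 1 := by
      rw [← pow_add]
      exact Even.neg_one_pow ⟨s, rfl⟩
    rw [e1, e2]
    linear_combination ((-1 : F) ^ (j - s) * (i.choose s : F) *
      (((i - 1 - s).choose (j - s) : F)) * c ^ s) * e3
  · intro i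
    rw [main i i, Finset.sum_range_succ]
    have hz : ∀ s ∈ Finset.range i,
        ((∑ k ∈ Finset.range (i + 1),
            (-1 : F) ^ k * (i.choose k : F) * (k.choose s : F)) * (-c) ^ s) • P s = 0 := by
      intro s hs
      simp only [Finset.mem_range] at hs
      rw [keySum i s i hs (by omega) le_rfl,
        Nat.choose_eq_zero_of_lt (show i - 1 - s < i - s from by omega)]
      simp
    rw [Finset.sum_congr rfl hz, Finset.sum_const_zero, zero_add]
    have hlast : ∑ k ∈ Finset.range (i + 1),
        (-1 : F) ^ k * (i.choose k : F) * (k.choose i : F) = (-1 : F) ^ i := by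
      rw [Finset.sum_range_succ]
      have : ∀ k ∈ Finset.range i,
          (-1 : F) ^ k * (i.choose k : F) * (k.choose i : F) = 0 := by
        intro k hk
        simp only [Finset.mem_range] at hk
        rw [Nat.choose_eq_zero_of_lt hk]
        simp
      rw [Finset.sum_congr rfl this, Finset.sum_const_zero, zero_add, Nat.choose_self]
      simp
    rw [hlast]
    congr 1
    have e3 : (-1 : F) ^ i * (-1 : F) ^ i = 1 := by
      rw [← pow_add]
      exact Even.neg_one_pow ⟨i, rfl⟩
    rw [neg_pow]
    linear_combination (c ^ i) * e3
end

section
/- Suppose $c \ne 0$ is a field element and $(P_i)_{i \ge 0}$ is a sequence in a vector space such that $\sum_{s=0}^{i} \binom{i}{s}(-c)^s P_s = 0$ for all $i > q$, where $q \ge 0$ is fixed. Then for every $i > q$, $P_i = c^{-i} \sum_{s=0}^{q} \binom{i}{s}\binom{i-1-s}{q-s}(-1)^{q-s} c^s P_s$. -/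
open Finset



private lemma alt_sum {F : Type*} [Field F] (N : ℕ) (hN : N ≠ 0) :
    ∑ k ∈ range (N + 1), (-1 : F) ^ k * (N.choose k : F) = 0 := by
  have h : ((∑ k ∈ range (N + 1), (-1 : ℤ) ^ k * (N.choose k : ℤ) : ℤ) : F) = 0 := by
    rw [Int.alternating_sum_range_choose_of_ne hN]; simp
  push_cast at h
  exact h

private lemma sumB {F : Type*} [Field F] (m n : ℕ) (h : m < n) :
    ∑ k ∈ range (n + 1 - m),
      (-1:F)^(m+k) * ((n.choose (m+k)) : F) * (((m+k).choose m) : F) = 0 := by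
  have hrw : ∀ k ∈ range (n+1-m),
      (-1:F)^(m+k) * ((n.choose (m+k)) : F) * (((m+k).choose m) : F)
      = ((-1:F)^m * (n.choose m : F)) * ((-1:F)^k * ((n-m).choose k : F)) := by
    intro k hk
    simp only [mem_range] at hk
    have h1 : n.choose (m+k) * (m+k).choose m = n.choose m * (n-m).choose k := by
      have := Nat.choose_mul (n := n) (show m ≤ m+k by omega)
      simpa using this
    have h2 : ((n.choose (m+k) : F)) * ((m+k).choose m : F)
        = (n.choose m : F) * ((n-m).choose k : F) := by have := congrArg (Nat.cast : ℕ → F) h1; push_cast at this; exact this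
    rw [pow_add]
    linear_combination ((-1:F)^m * (-1:F)^k) * h2
  rw [Finset.sum_congr rfl hrw, ← Finset.mul_sum,
    show n + 1 - m = (n - m) + 1 by omega, alt_sum (n-m) (by omega), mul_zero]


private lemma sumL {F : Type*} [Field F] (m : ℕ) :
    ∀ n : ℕ, m < n →
    ∑ k ∈ range (n - m), (-1:F)^(m+1+k) * (n.choose (m+1+k) : F) * (((m+k).choose m) : F)
      = (-1:F)^(m+1) := by
  intro n hn
  induction n, hn using Nat.le_induction with
  | base => simp
  | succ n hn IH =>
    have hrw : ∀ k ∈ range (n+1-m),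
        (-1:F)^(m+1+k) * ((n+1).choose (m+1+k) : F) * (((m+k).choose m) : F)
        = -((-1:F)^(m+k) * (n.choose (m+k) : F) * (((m+k).choose m) : F))
          + (-1:F)^(m+1+k) * (n.choose (m+1+k) : F) * (((m+k).choose m) : F) := by
      intro k hk
      have h1 : (n+1).choose (m+1+k) = n.choose (m+k) + n.choose (m+1+k) := by
        rw [show m+1+k = (m+k)+1 by omega]; exact Nat.choose_succ_succ' n (m+k)
      have h2 : ((n+1).choose (m+1+k) : F) = (n.choose (m+k) : F) + (n.choose (m+1+k) : F) := by
        have := congrArg (Nat.cast : ℕ → F) h1; push_cast at this; exact this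
      rw [h2, show m+1+k = (m+k)+1 by omega, pow_succ]
      ring
    rw [Finset.sum_congr rfl hrw, Finset.sum_add_distrib]
    have e1 : ∑ k ∈ range (n+1-m),
        -((-1:F)^(m+k) * (n.choose (m+k) : F) * (((m+k).choose m) : F)) = 0 := by
      rw [Finset.sum_neg_distrib, sumB m n hn, neg_zero]
    rw [e1, zero_add, show n+1-m = (n-m)+1 by omega, Finset.sum_range_succ,
      show m+1+(n-m) = n+1 by omega, Nat.choose_succ_self]
    simpa using IH


private lemma keyId {F : Type*} [Field F] (q i t : ℕ) (ht : t ≤ q) (hi : q < i) :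
    ∑ s ∈ Ico (q+1) (i+1),
      (-1:F)^s * (i.choose s : F) * (s.choose t : F) * (((s-1-t).choose (q-t)) : F)
      = -((-1:F)^q) * (i.choose t : F) := by
  rw [Finset.sum_Ico_eq_sum_range, show i + 1 - (q+1) = i - q by omega]
  have hrw : ∀ k ∈ range (i - q),
      (-1:F)^(q+1+k) * (i.choose (q+1+k) : F) * ((q+1+k).choose t : F)
          * (((q+1+k-1-t).choose (q-t)) : F)
      = ((i.choose t : F) * (-1:F)^t)
        * ((-1:F)^((q-t)+1+k) * ((i-t).choose ((q-t)+1+k) : F)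
            * ((((q-t)+k).choose (q-t)) : F)) := by
    intro k hk
    simp only [mem_range] at hk
    have h1 : i.choose (q+1+k) * (q+1+k).choose t = i.choose t * (i-t).choose ((q-t)+1+k) := by
      have := Nat.choose_mul (n := i) (show t ≤ q+1+k by omega)
      rw [show q+1+k-t = (q-t)+1+k by omega] at this
      exact this
    have h2 : (i.choose (q+1+k) : F) * ((q+1+k).choose t : F)
        = (i.choose t : F) * ((i-t).choose ((q-t)+1+k) : F) := by
      have := congrArg (Nat.cast : ℕ → F) h1; push_cast at this; exact this
    have hsign : (-1:F)^(q+1+k) = (-1:F)^t * (-1:F)^((q-t)+1+k) := by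
      rw [← pow_add]; congr 1; omega
    rw [show q+1+k-1-t = (q-t)+k by omega, hsign]
    linear_combination ((-1:F)^t * (-1:F)^((q-t)+1+k) * ((((q-t)+k).choose (q-t)) : F)) * h2
  rw [Finset.sum_congr rfl hrw, ← Finset.mul_sum]
  have hL := sumL (F := F) (q - t) (i - t) (by omega)
  rw [show i - t - (q - t) = i - q by omega] at hL
  rw [hL, pow_succ, show (-1:F)^q = (-1:F)^t * (-1:F)^(q-t) by
    rw [← pow_add]; congr 1; omega]
  ring


private lemma scalarId {F : Type*} [Field F] (c : F) (hc : c ≠ 0) (q i t : ℕ)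
    (ht : t ≤ q) (hi : q < i) :
    (i.choose t : F) * (-c)^t
      + ∑ s ∈ Ico (q+1) i, ((i.choose s : F) * (-c)^s * (c⁻¹)^s
          * ((s.choose t : F) * (((s-1-t).choose (q-t)) : F) * (-1:F)^(q-t) * c^t))
    = -((-1:F)^i * ((i.choose t : F) * (((i-1-t).choose (q-t)) : F) * (-1:F)^(q-t) * c^t)) := by
  have hrw : ∀ s ∈ Ico (q+1) i,
      (i.choose s : F) * (-c)^s * (c⁻¹)^s
          * ((s.choose t : F) * (((s-1-t).choose (q-t)) : F) * (-1:F)^(q-t) * c^t)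
      = ((-1:F)^(q-t) * c^t)
          * ((-1:F)^s * (i.choose s : F) * (s.choose t : F) * (((s-1-t).choose (q-t)) : F)) := by
    intro s _
    have hcs : (-c:F)^s * (c⁻¹)^s = (-1:F)^s := by
      rw [← mul_pow, neg_mul, mul_inv_cancel₀ hc]
    linear_combination ((i.choose s : F) * (s.choose t : F)
      * (((s-1-t).choose (q-t)) : F) * (-1:F)^(q-t) * c^t) * hcs
  rw [Finset.sum_congr rfl hrw, ← Finset.mul_sum]
  have hkey := keyId (F := F) q i t ht hi
  rw [Finset.sum_Ico_succ_top (by omega : q+1 ≤ i), Nat.choose_self] at hkey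
  have hS : ∑ s ∈ Ico (q+1) i,
      (-1:F)^s * (i.choose s : F) * (s.choose t : F) * (((s-1-t).choose (q-t)) : F)
      = -((-1:F)^q) * (i.choose t : F)
        - (-1:F)^i * (i.choose t : F) * (((i-1-t).choose (q-t)) : F) := by
    push_cast at hkey
    linear_combination hkey
  rw [hS, show (-1:F)^q = (-1:F)^t * (-1:F)^(q-t) by rw [← pow_add]; congr 1; omega,
    neg_pow c t]
  have hy : (-1:F)^(q-t) * (-1:F)^(q-t) = 1 := by
    rw [← pow_add]; exact Even.neg_one_pow ⟨q-t, rfl⟩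
  linear_combination (-((i.choose t : F) * (-1:F)^t * c^t)) * hy


/-- Formula (2.9) of the paper: a sequence satisfying the binomial vanishing
recurrence beyond level `q` is determined by its first `q+1` terms. -/
theorem stmt_2 {F V : Type*} [Field F] [CharZero F] [AddCommGroup V] [Module F V]
    (c : F) (hc : c ≠ 0) (q : ℕ) (P : ℕ → V)
    (h : ∀ i : ℕ, q < i → ∑ s ∈ Finset.range (i + 1), ((i.choose s : F) * (-c) ^ s) • P s = 0) :
    ∀ i : ℕ, q < i → P i =
      (c⁻¹) ^ i • ∑ s ∈ Finset.range (q + 1),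
        ((i.choose s : F) * ((i - 1 - s).choose (q - s) : F) * (-1 : F) ^ (q - s) * c ^ s) • P s := by
  intro i
  induction i using Nat.strong_induction_on with
  | _ i IH =>
  intro hqi
  have hrec := h i hqi
  rw [Finset.sum_range_succ, Nat.choose_self] at hrec
  have hPi : ((-c)^i) • P i = - ∑ s ∈ Finset.range i, ((i.choose s : F) * (-c)^s) • P s := by
    have h2 := eq_neg_of_add_eq_zero_right hrec
    rw [Nat.cast_one, one_mul] at h2
    exact h2
  -- split the range
  have hsplit : ∑ s ∈ Finset.range i, ((i.choose s : F) * (-c)^s) • P s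
      = ∑ s ∈ Finset.range (q+1), ((i.choose s : F) * (-c)^s) • P s
        + ∑ s ∈ Finset.Ico (q+1) i, ((i.choose s : F) * (-c)^s) • P s := by
    rw [Finset.range_eq_Ico, ← Finset.sum_Ico_consecutive _ (Nat.zero_le (q+1)) (by omega), Finset.range_eq_Ico]
  -- rewrite the Ico part using the induction hypothesis
  have hIco : ∀ s ∈ Finset.Ico (q+1) i, ((i.choose s : F) * (-c)^s) • P s
      = ∑ t ∈ Finset.range (q+1), ((i.choose s : F) * (-c)^s * (c⁻¹)^s
          * ((s.choose t : F) * (((s-1-t).choose (q-t)) : F) * (-1:F)^(q-t) * c^t)) • P t := by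
    intro s hs
    simp only [Finset.mem_Ico] at hs
    rw [IH s hs.2 hs.1, smul_smul, Finset.smul_sum]
    refine Finset.sum_congr rfl fun t _ => ?_
    rw [smul_smul]
  rw [hsplit, Finset.sum_congr rfl hIco, Finset.sum_comm] at hPi
  -- combine the two sums over t
  have hcomb : ∑ s ∈ Finset.range (q+1), ((i.choose s : F) * (-c)^s) • P s
      + ∑ t ∈ Finset.range (q+1), ∑ s ∈ Finset.Ico (q+1) i,
          ((i.choose s : F) * (-c)^s * (c⁻¹)^s
            * ((s.choose t : F) * (((s-1-t).choose (q-t)) : F) * (-1:F)^(q-t) * c^t)) • P t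
      = ∑ t ∈ Finset.range (q+1),
          (((i.choose t : F) * (-c)^t)
            + ∑ s ∈ Finset.Ico (q+1) i, ((i.choose s : F) * (-c)^s * (c⁻¹)^s
              * ((s.choose t : F) * (((s-1-t).choose (q-t)) : F) * (-1:F)^(q-t) * c^t))) • P t := by
    rw [← Finset.sum_add_distrib]
    refine Finset.sum_congr rfl fun t _ => ?_
    rw [add_smul, Finset.sum_smul]
  rw [hcomb] at hPi
  -- use the scalar identity
  have hfin : ∀ t ∈ Finset.range (q+1),
      (((i.choose t : F) * (-c)^t)
        + ∑ s ∈ Finset.Ico (q+1) i, ((i.choose s : F) * (-c)^s * (c⁻¹)^s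
          * ((s.choose t : F) * (((s-1-t).choose (q-t)) : F) * (-1:F)^(q-t) * c^t))) • P t
      = (-((-1:F)^i * ((i.choose t : F) * (((i-1-t).choose (q-t)) : F) * (-1:F)^(q-t) * c^t))) • P t := by
    intro t ht
    simp only [Finset.mem_range] at ht
    rw [scalarId c hc q i t (by omega) hqi]
  rw [Finset.sum_congr rfl hfin] at hPi
  -- conclude
  have hne : ((-c : F)^i) ≠ 0 := pow_ne_zero _ (neg_ne_zero.mpr hc)
  calc P i = ((-c)^i)⁻¹ • ((-c)^i • P i) := (inv_smul_smul₀ hne _).symm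
    _ = ((-c)^i)⁻¹ • (- ∑ t ∈ Finset.range (q+1),
          (-((-1:F)^i * ((i.choose t : F) * (((i-1-t).choose (q-t)) : F) * (-1:F)^(q-t) * c^t))) • P t) := by
        rw [hPi]
    _ = (c⁻¹) ^ i • ∑ t ∈ Finset.range (q + 1),
        ((i.choose t : F) * ((i - 1 - t).choose (q - t) : F) * (-1 : F) ^ (q - t) * c ^ t) • P t := by
        rw [← Finset.sum_neg_distrib, Finset.smul_sum, Finset.smul_sum]
        refine Finset.sum_congr rfl fun t _ => ?_
        rw [neg_smul, neg_neg, smul_smul, smul_smul]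
        congr 1
        rw [← inv_pow, inv_neg, neg_pow (c⁻¹) i]
        have hz : (-1:F)^i * (-1:F)^i = 1 := by
          rw [← pow_add]; exact Even.neg_one_pow ⟨i, rfl⟩
        linear_combination ((c⁻¹)^i * (i.choose t : F) * (((i-1-t).choose (q-t)) : F)
          * (-1:F)^(q-t) * c^t) * hz
end

section
/- In the Weyl algebra over $F[t,t^{-1}]$ (char $F$ = 0), for every integer $i$ the identity $3[t(d/dt)^2, [t(d/dt)^2, t^i]] - 2(2i-1)[t(d/dt)^3, t^i] + [i+1]_4\, t^{i-2} = 0$ holds, where $[i+1]_4 = (i+1)i(i-1)(i-2)$. -/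
/-- The falling factorial `[k]_s = k(k-1)⋯(k-s+1)` as an element of `F`. -/
noncomputable def fallFact (F : Type*) [Field F] (k : ℤ) (s : ℕ) : F :=
  ∏ m ∈ Finset.range s, ((k : F) - (m : F))

/-- The operator `t^i (d/dt)^j` on `F[t,t⁻¹]` (realized as `ℤ →₀ F`):
`t^n ↦ [n]_j t^{n+i-j}`. -/
noncomputable def diffOp (F : Type*) [Field F] (i : ℤ) (j : ℕ) :
    Module.End F (ℤ →₀ F) :=
  Finsupp.lsum F fun n : ℤ => fallFact F n j • Finsupp.lsingle (n + (i - (j : ℤ)))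

lemma diffOp_single (F : Type*) [Field F] (i : ℤ) (j : ℕ) (n : ℤ) (c : F) :
    diffOp F i j (Finsupp.single n c)
      = Finsupp.single (n + (i - (j : ℤ))) (fallFact F n j * c) := by
  rw [diffOp, Finsupp.lsum_single, LinearMap.smul_apply, Finsupp.lsingle_apply,
    Finsupp.smul_single, smul_eq_mul]

lemma end_lie (F : Type*) [Field F] (f g : Module.End F (ℤ →₀ F)) :
    ⁅f, g⁆ = f * g - g * f := rfl

/-- The operator identity preceding (2.10):
`3[t(d/dt)², [t(d/dt)², tⁱ]] - 2(2i-1)[t(d/dt)³, tⁱ] + [i+1]₄ t^{i-2} = 0`. -/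
theorem stmt_4 (F : Type*) [Field F] [CharZero F] (i : ℤ) :
    (3 : F) • ⁅diffOp F 1 2, ⁅diffOp F 1 2, diffOp F i 0⁆⁆
      - ((2 : F) * (2 * (i : F) - 1)) • ⁅diffOp F 1 3, diffOp F i 0⁆
      + fallFact F (i + 1) 4 • diffOp F (i - 2) 0 = 0 := by
  apply Finsupp.lhom_ext
  intro n c
  simp only [end_lie, mul_sub, sub_mul, LinearMap.add_apply, LinearMap.sub_apply,
    LinearMap.smul_apply, Module.End.mul_apply, LinearMap.zero_apply, map_sub, diffOp_single,
    Finsupp.smul_single, smul_eq_mul]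
  have h2 : ∀ m : ℤ, fallFact F m 2 = (m : F) * ((m : F) - 1) := by
    intro m; simp [fallFact, Finset.prod_range_succ]
  have h3 : ∀ m : ℤ, fallFact F m 3 = (m : F) * ((m : F) - 1) * ((m : F) - 2) := by
    intro m; simp [fallFact, Finset.prod_range_succ]
  have h0 : ∀ m : ℤ, fallFact F m 0 = 1 := fun m => by simp [fallFact]
  have h4 : fallFact F (i+1) 4 = ((i:F)+1) * (i:F) * ((i:F)-1) * ((i:F)-2) := by
    simp [fallFact, Finset.prod_range_succ]; ring
  simp only [h2, h3, h0, h4]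
  push_cast
  have e1 : n + (i - 0) + -1 + -1 = n + i - 2 := by ring
  have e2 : n + -1 + (i - 0) + -1 = n + i - 2 := by ring
  have e3 : n + -1 + -1 + (i - 0) = n + i - 2 := by ring
  have e4 : n + (i - 0) + -2 = n + i - 2 := by ring
  have e5 : n + -2 + (i - 0) = n + i - 2 := by ring
  have e6 : n + (i - 2 - 0) = n + i - 2 := by ring
  rw [e1, e2, e3, e4, e5, e6]
  simp only [smul_sub, Finsupp.smul_single, smul_eq_mul, ← Finsupp.single_sub,
    ← Finsupp.single_add, ← Finsupp.single_neg]
  rw [show (0 : ℤ →₀ F) = Finsupp.single (n + i - 2) (0 : F) by simp]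
  congr 1
  ring
end

section
/- Let $\Gamma$ be an additive subgroup of $F^n$ ($F$ algebraically closed of characteristic zero) containing a basis of $F^n$, and let $G = (G_1,\dots,G_n)$ be an $n$-tuple of pairwise commuting $p \times p$ matrices. Define an action of the Weyl-type Lie algebra $W(\Gamma,n)$ on the space $A_{p,G}$ with basis $\{y_\alpha^{(i)} : \alpha \in \Gamma, 1 \le i \le p\}$ by $(t^\alpha D^\mu) Y_\beta = Y_{\alpha+\beta} \prod_{i=1}^n (\beta_i \mathbf{1}_p + G_i)^{\mu_i}$, where $Y_\beta$ is the row vector $(y_\beta^{(1)},\dots,y_\beta^{(p)})$. Then this action makes $A_{p,G}$ a module over the associative algebra $\mathcal{A}(\Gamma,n)$ (and hence over the Lie algebra $W(\Gamma,n)$). -/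
/-- The matrix `∏ᵢ (βᵢ·1ₚ + Gᵢ)^{μᵢ}` appearing in the action (1.5). -/
noncomputable def coeffMat {F : Type*} [Field F] {n p : ℕ}
    (G : Fin n → Matrix (Fin p) (Fin p) F) (β : Fin n → F) (μ : Fin n → ℕ) :
    Matrix (Fin p) (Fin p) F :=
  (List.ofFn fun i => (β i • (1 : Matrix (Fin p) (Fin p) F) + G i) ^ μ i).prod

/-- The action (1.5) of `t^α D^μ ∈ W(Γ,n)` on the space `A_{p,G}` with basis
`{y_β^{(i)}}`, realized on `Γ → (Fin p → F)`:
`(t^α D^μ) Y_β = Y_{α+β} ∏ᵢ (βᵢ·1ₚ + Gᵢ)^{μᵢ}`. -/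
noncomputable def rho {F : Type*} [Field F] {n p : ℕ} (Γ : AddSubgroup (Fin n → F))
    (G : Fin n → Matrix (Fin p) (Fin p) F) (α : Γ) (μ : Fin n → ℕ) :
    (Γ → (Fin p → F)) →ₗ[F] (Γ → (Fin p → F)) where
  toFun v γ := (coeffMat G (((γ - α : Γ) : Fin n → F)) μ).mulVec (v (γ - α))
  map_add' u v := by
    funext γ
    simp [Matrix.mulVec_add]
  map_smul' c v := by
    funext γ
    simp [Matrix.mulVec_smul]

section Aux

variable {F : Type*} [Field F] {n p : ℕ}

lemma aux_Iic_eq_piFinset (μ : Fin n → ℕ) :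
    Finset.Iic μ = Fintype.piFinset fun i => Finset.range (μ i + 1) := by
  ext l
  simp [Fintype.mem_piFinset, Pi.le_def, Nat.lt_succ_iff]

/-- The key identity in a commutative `F`-algebra. -/
lemma aux_key_comm {R : Type*} [CommRing R] [Algebra F R] (M : Fin n → R) (b : Fin n → F)
    (μ ν : Fin n → ℕ) :
    (∏ i, (M i + algebraMap F R (b i)) ^ μ i) * ∏ i, M i ^ ν i =
      ∑ l ∈ Finset.Iic μ,
        algebraMap F R ((∏ i, ((μ i).choose (l i) : F)) * ∏ i, b i ^ l i) *
          ∏ i, M i ^ (μ i + ν i - l i) := by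
  have h1 : ∀ i, (M i + algebraMap F R (b i)) ^ μ i =
      ∑ k ∈ Finset.range (μ i + 1),
        algebraMap F R (((μ i).choose k : F) * b i ^ k) * M i ^ (μ i - k) := by
    intro i
    rw [add_comm, add_pow]
    refine Finset.sum_congr rfl fun k hk => ?_
    rw [map_mul, map_pow, map_natCast]
    ring
  simp_rw [h1]
  rw [Finset.prod_univ_sum, Finset.sum_mul, aux_Iic_eq_piFinset]
  refine Finset.sum_congr rfl fun l hl => ?_
  have hle : ∀ i, l i ≤ μ i := by
    intro i
    have := (Fintype.mem_piFinset.mp hl) i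
    simpa [Nat.lt_succ_iff] using this
  rw [Finset.prod_mul_distrib, ← map_prod, mul_assoc, ← Finset.prod_mul_distrib]
  congr 1
  · congr 1
    rw [← Finset.prod_mul_distrib]
  · refine Finset.prod_congr rfl fun i _ => ?_
    rw [← pow_add]
    congr 1
    have := hle i
    omega

variable (G : Fin n → Matrix (Fin p) (Fin p) F)

lemma aux_mem_adjoin (δ : Fin n → F) (i : Fin n) :
    δ i • (1 : Matrix (Fin p) (Fin p) F) + G i ∈ Algebra.adjoin F (Set.range G) :=
  add_mem (Subalgebra.smul_mem _ (one_mem _) _) (Algebra.subset_adjoin ⟨i, rfl⟩)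

/-- The element `δᵢ • 1 + Gᵢ` viewed inside the (commutative) subalgebra generated by `G`. -/
noncomputable def auxMS (δ : Fin n → F) (i : Fin n) : Algebra.adjoin F (Set.range G) :=
  ⟨δ i • (1 : Matrix (Fin p) (Fin p) F) + G i, aux_mem_adjoin G δ i⟩

lemma aux_coeffMat_eq (hG : ∀ i j, G i * G j = G j * G i) (δ : Fin n → F) (μ : Fin n → ℕ) :
    letI : CommRing (Algebra.adjoin F (Set.range G)) :=
      Algebra.adjoinCommRingOfComm F (by rintro a ⟨i, rfl⟩ b ⟨j, rfl⟩; exact hG i j)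
    coeffMat G δ μ = (Algebra.adjoin F (Set.range G)).val (∏ i, auxMS G δ i ^ μ i) := by
  letI : CommRing (Algebra.adjoin F (Set.range G)) :=
    Algebra.adjoinCommRingOfComm F (by rintro a ⟨i, rfl⟩ b ⟨j, rfl⟩; exact hG i j)
  rw [← List.prod_ofFn, map_list_prod, List.map_ofFn]
  congr 1

lemma aux_sum_mulVec {ι : Type*} (s : Finset ι) (f : ι → Matrix (Fin p) (Fin p) F)
    (w : Fin p → F) : (∑ l ∈ s, f l).mulVec w = ∑ l ∈ s, (f l).mulVec w := by
  classical
  induction s using Finset.induction_on with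
  | empty => simp [Matrix.zero_mulVec]
  | insert _ _ h ih => simp [Finset.sum_insert h, Matrix.add_mulVec, ih]

set_option synthInstance.maxHeartbeats 1000000 in
/-- The matrix-level form of the key identity. -/
lemma aux_coeffMat_mul (hG : ∀ i j, G i * G j = G j * G i) (δ β' : Fin n → F) (μ ν : Fin n → ℕ) :
    coeffMat G (δ + β') μ * coeffMat G δ ν =
      ∑ l ∈ Finset.Iic μ,
        ((∏ i, ((μ i).choose (l i) : F)) * ∏ i, β' i ^ l i) • coeffMat G δ (μ + ν - l) := by
  letI : CommRing (Algebra.adjoin F (Set.range G)) :=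
    Algebra.adjoinCommRingOfComm F (by rintro a ⟨i, rfl⟩ b ⟨j, rfl⟩; exact hG i j)
  have hMS : ∀ i, auxMS G (δ + β') i =
      auxMS G δ i + algebraMap F (Algebra.adjoin F (Set.range G)) (β' i) := by
    intro i
    apply Subtype.ext
    show (δ i + β' i) • (1 : Matrix (Fin p) (Fin p) F) + G i =
      (δ i • (1 : Matrix (Fin p) (Fin p) F) + G i) +
        ((algebraMap F (Algebra.adjoin F (Set.range G)) (β' i) :
          Algebra.adjoin F (Set.range G)) : Matrix (Fin p) (Fin p) F)
    rw [add_smul]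
    have : ((algebraMap F (Algebra.adjoin F (Set.range G)) (β' i) :
        Algebra.adjoin F (Set.range G)) : Matrix (Fin p) (Fin p) F) =
        β' i • (1 : Matrix (Fin p) (Fin p) F) := by
      simp [Algebra.algebraMap_eq_smul_one]
    rw [this]
    abel
  rw [aux_coeffMat_eq G hG (δ + β') μ, aux_coeffMat_eq G hG δ ν, ← map_mul]
  simp_rw [hMS]
  rw [aux_key_comm, map_sum]
  refine Finset.sum_congr rfl fun l hl => ?_
  rw [aux_coeffMat_eq G hG δ (μ + ν - l), ← Algebra.smul_def, map_smul]
  rfl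

end Aux

/-- The action (1.5) makes `A_{p,G}` a module over the associative algebra
`𝒜(Γ,n)`: the operators satisfy the defining product relation
`(t^α D^μ)(t^β D^ν) = ∑_{λ ≤ μ} C(μ,λ) β^λ t^{α+β} D^{μ+ν-λ}` (and hence a
module over the Lie algebra `W(Γ,n)`). -/
theorem stmt_10 {F : Type*} [Field F] [IsAlgClosed F] [CharZero F] {n p : ℕ}
    (Γ : AddSubgroup (Fin n → F))
    (hΓ : Submodule.span F (Γ : Set (Fin n → F)) = ⊤)
    (G : Fin n → Matrix (Fin p) (Fin p) F)
    (hG : ∀ i j, G i * G j = G j * G i) :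
    ∀ (α β : Γ) (μ ν : Fin n → ℕ),
      rho Γ G α μ ∘ₗ rho Γ G β ν =
        ∑ l ∈ Finset.Iic μ,
          ((∏ i, ((μ i).choose (l i) : F)) * ∏ i, ((β : Fin n → F) i) ^ (l i)) •
            rho Γ G (α + β) (μ + ν - l) := by
  intro α β μ ν
  apply LinearMap.ext
  intro v
  funext γ
  have hγ : γ - (α + β) = γ - α - β := by abel
  have hcast : ((γ - α : Γ) : Fin n → F) = ((γ - α - β : Γ) : Fin n → F) + (β : Fin n → F) := by
    have : (γ - α : Γ) = (γ - α - β) + β := by abel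
    rw [this]
    push_cast
    ring
  simp only [LinearMap.coe_comp, Function.comp_apply, LinearMap.sum_apply,
    LinearMap.smul_apply, Finset.sum_apply, Pi.smul_apply, rho, LinearMap.coe_mk,
    AddHom.coe_mk, hγ]
  rw [Matrix.mulVec_mulVec, hcast, aux_coeffMat_mul G hG, aux_sum_mulVec]
  refine Finset.sum_congr rfl fun l hl => ?_
  rw [Matrix.smul_mulVec]
end

section
/- With notation as in the construction of $A_{p,G}$ for $n=1$: the twisted action $(t^\alpha D^\mu) Y_\beta = (-1)^{\mu+1} Y_{\alpha+\beta} ((\alpha+\beta)\mathbf{1}_p + G)^\mu$ defines a Lie algebra module $\overline{A}_{p,G}$ over $W(\Gamma,1)$, but for $p = 1$, $G = 0$, $\Gamma = \mathbb{Z}$ it is not a module over the associative algebra $\mathcal{A}(\mathbb{Z},1)$ (the defining relation of the associative product fails). -/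
/-- The twisted action (1.7) of `t^α D^μ ∈ W(Γ,1)` on `Ā_{p,G}`:
`(t^α D^μ) Y_β = (-1)^{μ+1} Y_{α+β} ((α+β)·1ₚ + G)^μ`, realized on
`Γ → (Fin p → F)`. -/
noncomputable def tauBar {F : Type*} [Field F] {p : ℕ} (Γ : AddSubgroup F)
    (G : Matrix (Fin p) (Fin p) F) (α : Γ) (μ : ℕ) :
    (Γ → (Fin p → F)) →ₗ[F] (Γ → (Fin p → F)) where
  toFun v γ := ((-1 : F) ^ (μ + 1)) •
    (((γ : F) • (1 : Matrix (Fin p) (Fin p) F) + G) ^ μ).mulVec (v (γ - α))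
  map_add' u v := by
    funext γ
    simp [Matrix.mulVec_add]
  map_smul' c v := by
    funext γ
    simp [Matrix.mulVec_smul, smul_comm c]

/-- The twisted action for `p = 1`, `G = 0`, `Γ = ℤ`, realized on `ℤ → F`:
`(t^α D^μ) y_β = (-1)^{μ+1} (α+β)^μ y_{α+β}`. -/
noncomputable def tauBarZ (F : Type*) [Field F] (α : ℤ) (μ : ℕ) :
    (ℤ → F) →ₗ[F] (ℤ → F) where
  toFun f γ := ((-1 : F) ^ (μ + 1)) * ((γ : F) ^ μ) * f (γ - α)
  map_add' f g := by funext γ; simp [mul_add]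
  map_smul' c f := by funext γ; simp [smul_eq_mul]; ring

open Finset Matrix

lemma sum_mulVec' {F : Type*} [Field F] {p : ℕ} {s : Finset ℕ}
    (A : ℕ → Matrix (Fin p) (Fin p) F) (w : Fin p → F) :
    (∑ i ∈ s, A i).mulVec w = ∑ i ∈ s, (A i).mulVec w := by
  induction s using Finset.induction with
  | empty => simp [Matrix.zero_mulVec]
  | insert _ _ h ih => simp [Finset.sum_insert h, Matrix.add_mulVec, ih]

lemma binom_mat {F : Type*} [Field F] {p : ℕ} (M : Matrix (Fin p) (Fin p) F)
    (c : F) (n : ℕ) :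
    (M + c • 1) ^ n = ∑ l ∈ range (n + 1), ((n.choose l : F) * c ^ l) • M ^ (n - l) := by
  have hc : Commute M (c • (1 : Matrix (Fin p) (Fin p) F)) :=
    (Commute.one_right M).smul_right c
  rw [hc.add_pow]
  rw [← Finset.sum_range_reflect]
  apply Finset.sum_congr rfl
  intro l hl
  simp only [Finset.mem_range] at hl
  have h1 : n + 1 - 1 - l = n - l := by omega
  have h2 : n - (n - l) = l := by omega
  rw [h1, h2, Nat.choose_symm (show l ≤ n by omega), smul_pow, one_pow,
    mul_smul_comm, mul_one]
  rw [smul_mul_assoc, ← (Nat.cast_commute (n.choose l) (M ^ (n - l))).eq, ← nsmul_eq_mul,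
    ← Nat.cast_smul_eq_nsmul F, smul_smul, mul_comm]

lemma key_mat {F : Type*} [Field F] {p : ℕ} (M : Matrix (Fin p) (Fin p) F)
    (a b : F) (μ ν : ℕ) :
    ((-1 : F) ^ (μ + 1)) • (((-1 : F) ^ (ν + 1)) • (M ^ μ * (M + (-a) • 1) ^ ν))
      - ((-1 : F) ^ (ν + 1)) • (((-1 : F) ^ (μ + 1)) • (M ^ ν * (M + (-b) • 1) ^ μ))
    = ∑ l ∈ range (μ + 1), ((μ.choose l : F) * b ^ l) •
        (((-1 : F) ^ (μ + ν - l + 1)) • M ^ (μ + ν - l))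
      - ∑ l ∈ range (ν + 1), ((ν.choose l : F) * a ^ l) •
        (((-1 : F) ^ (μ + ν - l + 1)) • M ^ (μ + ν - l)) := by
  rw [binom_mat M (-a) ν, binom_mat M (-b) μ, Finset.mul_sum, Finset.mul_sum,
    Finset.smul_sum, Finset.smul_sum, Finset.smul_sum, Finset.smul_sum]
  have e1 : ∑ l ∈ range (ν + 1),
      ((-1 : F) ^ (μ + 1)) • (((-1 : F) ^ (ν + 1)) •
        (M ^ μ * (((ν.choose l : F) * (-a) ^ l) • M ^ (ν - l))))
    = - ∑ l ∈ range (ν + 1), ((ν.choose l : F) * a ^ l) •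
        (((-1 : F) ^ (μ + ν - l + 1)) • M ^ (μ + ν - l)) := by
    rw [← Finset.sum_neg_distrib]
    apply Finset.sum_congr rfl
    intro l hl
    simp only [Finset.mem_range] at hl
    rw [mul_smul_comm, ← pow_add, show μ + (ν - l) = μ + ν - l by omega]
    rw [smul_smul, smul_smul, smul_smul, ← neg_smul]
    congr 1
    have hp : ((-1 : F)) ^ (μ + ν - l + 1) = (-1) ^ (μ + ν + l + 1) := by
      have : (-1 : F) ^ (μ + ν + l + 1) = (-1) ^ ((μ + ν - l + 1) + 2 * l) := by
        congr 1; omega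
      rw [this, pow_add ((-1 : F)) (μ + ν - l + 1) (2 * l), pow_mul]; simp
    rw [hp, neg_pow a l]
    ring
  have e2 : ∑ l ∈ range (μ + 1),
      ((-1 : F) ^ (ν + 1)) • (((-1 : F) ^ (μ + 1)) •
        (M ^ ν * (((μ.choose l : F) * (-b) ^ l) • M ^ (μ - l))))
    = - ∑ l ∈ range (μ + 1), ((μ.choose l : F) * b ^ l) •
        (((-1 : F) ^ (μ + ν - l + 1)) • M ^ (μ + ν - l)) := by
    rw [← Finset.sum_neg_distrib]
    apply Finset.sum_congr rfl
    intro l hl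
    simp only [Finset.mem_range] at hl
    rw [mul_smul_comm, ← pow_add, show ν + (μ - l) = μ + ν - l by omega]
    rw [smul_smul, smul_smul, smul_smul, ← neg_smul]
    congr 1
    have hp : ((-1 : F)) ^ (μ + ν - l + 1) = (-1) ^ (μ + ν + l + 1) := by
      have : (-1 : F) ^ (μ + ν + l + 1) = (-1) ^ ((μ + ν - l + 1) + 2 * l) := by
        congr 1; omega
      rw [this, pow_add ((-1 : F)) (μ + ν - l + 1) (2 * l), pow_mul]; simp
    rw [hp, neg_pow b l]
    ring
  rw [e1, e2]
  abel


/-- The twisted action (1.7) defines a Lie algebra module `Ā_{p,G}` over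
`W(Γ,1)` (the operators represent the commutator bracket of `W(Γ,1)`), but
for `p = 1`, `G = 0`, `Γ = ℤ` it is not a module over the associative
algebra `𝒜(ℤ,1)`: the defining relation of the associative product fails. -/
theorem stmt_11 (F : Type*) [Field F] [CharZero F] :
    (∀ (p : ℕ) (Γ : AddSubgroup F) (G : Matrix (Fin p) (Fin p) F)
        (α β : Γ) (μ ν : ℕ),
      tauBar Γ G α μ ∘ₗ tauBar Γ G β ν - tauBar Γ G β ν ∘ₗ tauBar Γ G α μ =
        ∑ l ∈ Finset.range (μ + 1),
          ((μ.choose l : F) * ((β : F)) ^ l) • tauBar Γ G (α + β) (μ + ν - l)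
        - ∑ l ∈ Finset.range (ν + 1),
          ((ν.choose l : F) * ((α : F)) ^ l) • tauBar Γ G (α + β) (μ + ν - l)) ∧
    ¬ (∀ (α β : ℤ) (μ ν : ℕ),
      tauBarZ F α μ ∘ₗ tauBarZ F β ν =
        ∑ l ∈ Finset.range (μ + 1),
          ((μ.choose l : F) * ((β : F)) ^ l) • tauBarZ F (α + β) (μ + ν - l)) := by
  constructor
  · intro p Γ G α β μ ν
    refine LinearMap.ext fun v => funext fun γ => ?_
    simp only [LinearMap.sub_apply, LinearMap.comp_apply, LinearMap.coe_sum,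
      LinearMap.smul_apply, Finset.sum_apply, Pi.sub_apply, Pi.smul_apply, tauBar,
      LinearMap.coe_mk, AddHom.coe_mk]
    have hM : ∀ x : Γ, (((γ - x : Γ) : F)) • (1 : Matrix (Fin p) (Fin p) F) + G
        = (((γ : F)) • (1 : Matrix (Fin p) (Fin p) F) + G) + (-(x : F)) • 1 := by
      intro x
      push_cast
      rw [sub_smul, neg_smul]
      abel
    rw [hM α, hM β, sub_sub, sub_sub, add_comm (β : Γ) α]
    simp only [Matrix.mulVec_smul, Matrix.mulVec_mulVec]
    have hk := congrArg (fun A : Matrix (Fin p) (Fin p) F => A.mulVec (v (γ - (α + β))))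
      (key_mat (((γ : F)) • (1 : Matrix (Fin p) (Fin p) F) + G) (α : F) (β : F) μ ν)
    simpa [Matrix.sub_mulVec, Matrix.smul_mulVec, sum_mulVec'] using hk
  · intro h
    have h2 := congrArg (fun T : (ℤ → F) →ₗ[F] (ℤ → F) =>
      T (fun _ => (1 : F)) 1) (h 0 0 1 1)
    simp [tauBarZ, Finset.sum_range_succ, LinearMap.comp_apply] at h2
    norm_num at h2
end

section
/- Suppose a scalar $c \ne 0$ and sequences $P_i = c^{1-i}$ (for all $i \in \mathbb{Z}$), $Q_i = \tfrac{1}{2} c^{1-i}(1-c)(i-1)$ (for $i \ne -1$), $R_i = \tfrac{1}{6} c^{1-i}(c-1)(5-4c+(c-2)i)i + c^{-i} R_0$ with $R_0$ a scalar, satisfy the relation $([i]_2 P_0 + 2i Q_0) Q_i + 2 P_{i+1} R_0 - (2(i+1) R_i + [i+1]_2 Q_{i-1}) = 0$ for all integers $i \ge 1$, where $[m]_2 = m(m-1)$ and $Q_0 = -\tfrac12 c(1-c)$. Then $c = 1$ and $R_0 = 0$ (hence $P_i = 1$, $Q_i = R_i = 0$ for all applicable $i$). -/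
/-- The final step (2.12)–(2.15) of the proof of Proposition 2.2 in the scalar
case: the polynomial identity in `i` forces `c = 1` and `R₀ = 0`. -/
theorem stmt_15 {F : Type*} [Field F] [CharZero F] (c R0 : F) (hc : c ≠ 0)
    (P : ℤ → F) (hP : ∀ i : ℤ, P i = c ^ (1 - i))
    (Q : ℤ → F) (hQ : ∀ i : ℤ, i ≠ -1 → Q i = (1 / 2) * c ^ (1 - i) * (1 - c) * ((i : F) - 1))
    (R : ℤ → F) (hR : ∀ i : ℤ, i ≠ -1 →
      R i = (1 / 6) * c ^ (1 - i) * (c - 1) * (5 - 4 * c + (c - 2) * (i : F)) * (i : F)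
        + c ^ (-i) * R0)
    (hrel : ∀ i : ℤ, 1 ≤ i →
      ((i : F) * ((i : F) - 1) * P 0 + 2 * (i : F) * Q 0) * Q i + 2 * P (i + 1) * R0
        - (2 * ((i : F) + 1) * R i + ((i : F) + 1) * (i : F) * Q (i - 1)) = 0) :
    c = 1 ∧ R0 = 0 := by
  have h1 := hrel 1 (by norm_num)
  have h2 := hrel 2 (by norm_num)
  have h3 := hrel 3 (by norm_num)
  norm_num at h1 h2 h3
  rw [hP 2, hQ 0 (by norm_num), hQ 1 (by norm_num), hR 1 (by norm_num)] at h1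
  rw [hP 0, hP 3, hQ 0 (by norm_num), hQ 2 (by norm_num), hQ 1 (by norm_num),
    hR 2 (by norm_num)] at h2
  rw [hP 0, hP 4, hQ 0 (by norm_num), hQ 3 (by norm_num), hQ 2 (by norm_num),
    hR 3 (by norm_num)] at h3
  push_cast at h1 h2 h3
  have hcd : c * c⁻¹ = 1 := mul_inv_cancel₀ hc
  norm_num [zpow_neg] at h1 h2 h3

  have E1 : 2*R0 = c*(c-1)*(c-2) := by
    linear_combination (-c) * h1 - 2*R0*hcd
  have hv : c^2 * (c^2)⁻¹ = 1 := mul_inv_cancel₀ (pow_ne_zero 2 hc)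
  have hw : c^3 * (c^3)⁻¹ = 1 := mul_inv_cancel₀ (pow_ne_zero 3 hc)
  have E2 : 4*R0 = c*(c-1)*(-c^2+4*c-2) := by
    linear_combination (-(c^2)) * h2 + c*(c-1)*(-c^2+4*c-2)*hcd - 4*R0*hv
  have E3 : 6*R0 = c*(c-1)*(-3*c^2+7*c+4) := by
    linear_combination (-(c^3)) * h3 + (c-1)*c*(c+1)*(4-3*c)*hv
      + 6*c^2*(c-1)*hcd - 6*R0*hw
  have F1 : (c-1)*(c^2-2*c-2)*c = 0 := by linear_combination E2 - 2*E1
  have F2 : (c-1)*(3*c^2-4*c-10)*c = 0 := by linear_combination E3 - 3*E1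
  have F3 : (c-1)*(c-2)*c = 0 := by linear_combination -(3/2)*F1 + (1/2)*F2
  have hc1 : c = 1 := by
    rcases mul_eq_zero.1 F3 with h | h
    · rcases mul_eq_zero.1 h with h' | h'
      · exact sub_eq_zero.1 h'
      · have hc2 : c = 2 := sub_eq_zero.1 h'
        exfalso
        rw [hc2] at F1
        norm_num at F1
    · exact absurd h hc
  refine ⟨hc1, ?_⟩
  rw [hc1] at E1
  linear_combination E1 / 2
end
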